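/- arXiv:math/0602144 — 2 statements merged into one kernel-verified Lean document; each statement's English description precedes it below -/
import Mathlib

section
/- Let n be an odd integer with n > 3, let d be a divisor of n with d > 1, and let q ≥ 2 be an integer. Set e = (n/d)·(n−2)·(d−1)/2 (an integer, since d is odd). Then ∏_{j=1}^{n} (q^{j} − 1) > q^{e} · ∏_{j=1}^{n/d} (q^{jd} − 1), and moreover q^{e} > n; in particular ∏_{j=1}^{n}(q^j − 1) > n · ∏_{j=1}^{n/d}(q^{jd} − 1). -/
/-!
Split `{1, …, n}` into the multiples `a d` of `d`, whose factors `q ^ (a d) - 1` form the product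
on the left, and the remaining indices `j`. For these `q ^ (j - 1) ≤ q ^ j - 1`, strictly at
`j = 2`, which is not a multiple of the odd `d > 1`; and by Gauss's summation formula their
exponents `j - 1` add up to exactly `e`. Finally `e ≥ n - 2` because `d - 1 ≥ 2`, and
`n < 2 ^ (n - 2)` once `n ≥ 5`.
-/

open Finset

namespace Nat

theorem Icc_filter_dvd_eq_map {d : ℕ} (hd : 0 < d) (n : ℕ) :
    {j ∈ Icc 1 n | d ∣ j} = (Icc 1 (n / d)).map ⟨(· * d), mul_left_injective₀ hd.ne'⟩ := by
  ext j
  simp only [mem_map, mem_filter, mem_Icc, Nat.le_div_iff_mul_le hd, dvd_iff_exists_eq_mul_left,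
    Function.Embedding.coeFn_mk]
  constructor
  · rintro ⟨⟨h1, h2⟩, a, rfl⟩
    exact ⟨a, ⟨Nat.pos_of_mul_pos_right h1, h2⟩, rfl⟩
  · rintro ⟨a, ⟨h1, h2⟩, rfl⟩
    exact ⟨⟨Nat.mul_pos h1 hd, h2⟩, a, rfl⟩

theorem lt_two_pow_sub_two {n : ℕ} (hn : 5 ≤ n) : n < 2 ^ (n - 2) := by
  induction n, hn using Nat.le_induction with
  | base => norm_num
  | succ n hn ih =>
    rw [show n + 1 - 2 = n - 2 + 1 by omega, pow_succ]
    omega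

end Nat

theorem sum_Icc_sub_one_mul_two (N : ℕ) : (∑ j ∈ Icc 1 N, ((j : ℤ) - 1)) * 2 = N * (N - 1) := by
  induction N with
  | zero => simp
  | succ N ih =>
    rw [sum_Icc_succ_top (by omega), add_mul, ih]
    push_cast
    ring

theorem Nat.cast_sum_sub_one {s : Finset ℕ} (hs : ∀ j ∈ s, 1 ≤ j) :
    ((∑ j ∈ s, (j - 1) : ℕ) : ℤ) = ∑ j ∈ s, ((j : ℤ) - 1) := by
  push_cast
  exact sum_congr rfl fun j hj => by rw [Nat.cast_sub (hs j hj), Nat.cast_one]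

theorem sum_Icc_filter_not_dvd_sub_one_mul_two {n d : ℕ} (hd : 0 < d) (hdn : d ∣ n) :
    ((∑ j ∈ Icc 1 n with ¬d ∣ j, (j - 1) : ℕ) : ℤ) * 2 =
      (n / d : ℕ) * ((n : ℤ) - 2) * ((d : ℤ) - 1) := by
  obtain ⟨m, rfl⟩ := hdn
  have hsplit := sum_filter_add_sum_filter_not (Icc 1 (d * m)) (d ∣ ·) fun j => (j : ℤ) - 1
  rw [Nat.Icc_filter_dvd_eq_map hd, sum_map, Nat.mul_div_cancel_left m hd] at hsplit
  have hmult : ∑ a ∈ Icc 1 m, (((a * d : ℕ) : ℤ) - 1) =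
      d * ∑ a ∈ Icc 1 m, ((a : ℤ) - 1) + m * (d - 1) := by
    have hconst : ∑ _a ∈ Icc 1 m, ((d : ℤ) - 1) = m * (d - 1) := by simp [mul_sub]
    rw [← hconst, mul_sum, ← sum_add_distrib]
    exact sum_congr rfl fun a _ => by push_cast; ring
  rw [Nat.cast_sum_sub_one fun j hj => (mem_Icc.1 (mem_filter.1 hj).1).1,
    Nat.mul_div_cancel_left m hd]
  have hall := sum_Icc_sub_one_mul_two (d * m)
  have hquot := sum_Icc_sub_one_mul_two m
  simp only [Function.Embedding.coeFn_mk, hmult] at hsplit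
  push_cast at hall ⊢
  linear_combination 2 * hsplit + hall - (d : ℤ) * hquot

theorem sum_Icc_filter_not_dvd_sub_one {n d : ℕ} (hn : 2 ≤ n) (hd : 1 < d) (hdn : d ∣ n) :
    ∑ j ∈ Icc 1 n with ¬d ∣ j, (j - 1) = n / d * (n - 2) * (d - 1) / 2 := by
  have h := sum_Icc_filter_not_dvd_sub_one_mul_two (by omega : 0 < d) hdn
  have h_nat : (∑ j ∈ Icc 1 n with ¬d ∣ j, (j - 1)) * 2 = n / d * (n - 2) * (d - 1) := by
    apply Nat.cast_injective (R := ℤ)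
    rw [Nat.cast_mul, Nat.cast_ofNat, h]
    simp only [Nat.cast_mul, Nat.cast_sub hn, Nat.cast_sub hd.le, Nat.cast_ofNat, Nat.cast_one]
  omega

theorem prod_Icc_eq_prod_mul_prod_filter_not_dvd {M : Type*} [CommMonoid M] (f : ℕ → M)
    {d : ℕ} (hd : 0 < d) (n : ℕ) :
    ∏ j ∈ Icc 1 n, f j = (∏ a ∈ Icc 1 (n / d), f (a * d)) * ∏ j ∈ Icc 1 n with ¬d ∣ j, f j := by
  rw [← prod_filter_mul_prod_filter_not (Icc 1 n) (d ∣ ·), Nat.Icc_filter_dvd_eq_map hd, prod_map]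
  rfl

section PowSubOne

variable {R : Type*} [CommRing R] [LinearOrder R] [IsStrictOrderedRing R] {q : R}

theorem pow_pred_le_pow_sub_one (hq : 2 ≤ q) {j : ℕ} (hj : 1 ≤ j) : q ^ (j - 1) ≤ q ^ j - 1 := by
  obtain ⟨k, rfl⟩ := Nat.exists_eq_add_of_le' hj
  have : 1 ≤ q ^ k := one_le_pow₀ (by linarith)
  rw [Nat.add_sub_cancel, pow_succ]
  nlinarith

theorem pow_pred_lt_pow_sub_one (hq : 2 ≤ q) {j : ℕ} (hj : 2 ≤ j) : q ^ (j - 1) < q ^ j - 1 := by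
  obtain ⟨k, rfl⟩ := Nat.exists_eq_add_of_le' hj
  have : 1 < q ^ (k + 1) := one_lt_pow₀ (by linarith) k.succ_ne_zero
  rw [show k + 2 - 1 = k + 1 by omega, pow_succ _ (k + 1)]
  nlinarith

theorem pow_sum_sub_one_lt_prod_pow_sub_one (hq : 2 ≤ q) {s : Finset ℕ} (hs : ∀ j ∈ s, 1 ≤ j)
    (h2 : ∃ j ∈ s, 2 ≤ j) : q ^ ∑ j ∈ s, (j - 1) < ∏ j ∈ s, (q ^ j - 1) := by
  obtain ⟨k, hk, hk2⟩ := h2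
  rw [← prod_pow_eq_pow_sum]
  exact prod_lt_prod (fun j _ => pow_pos (by linarith) _)
    (fun j hj => pow_pred_le_pow_sub_one hq (hs j hj)) ⟨k, hk, pow_pred_lt_pow_sub_one hq hk2⟩

end PowSubOne

/-- Let `n` be an odd integer with `n > 3`, let `d` be a divisor of `n` with `d > 1`, and
let `q ≥ 2` be an integer. Set `e = (n/d)·(n−2)·(d−1)/2` (an integer, since `d` is odd).
Then `∏_{j=1}^{n} (q^j − 1) > q^e · ∏_{j=1}^{n/d} (q^{jd} − 1)`, and moreover `q^e > n`;
in particular `∏_{j=1}^{n} (q^j − 1) > n · ∏_{j=1}^{n/d} (q^{jd} − 1)`. -/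
theorem stmt_13 (n d : ℕ) (hn : Odd n) (hn3 : 3 < n) (hd : d ∣ n) (hd1 : 1 < d)
    (q : ℤ) (hq : 2 ≤ q) (e : ℕ) (he : e = n / d * (n - 2) * (d - 1) / 2) :
    (q ^ e * ∏ j ∈ Finset.Icc 1 (n / d), (q ^ (j * d) - 1) <
        ∏ j ∈ Finset.Icc 1 n, (q ^ j - 1)) ∧
      (n : ℤ) < q ^ e ∧
      (n : ℤ) * ∏ j ∈ Finset.Icc 1 (n / d), (q ^ (j * d) - 1) <
        ∏ j ∈ Finset.Icc 1 n, (q ^ j - 1) := by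
  have hd3 : 3 ≤ d := by
    obtain ⟨c, rfl⟩ := Odd.of_dvd_nat hn hd
    omega
  have hn5 : 5 ≤ n := by
    obtain ⟨k, rfl⟩ := hn
    omega
  have hm : 1 ≤ n / d := Nat.div_pos (Nat.le_of_dvd (by omega) hd) (by omega)
  have hP : 0 < ∏ j ∈ Icc 1 (n / d), (q ^ (j * d) - 1) := prod_pos fun j hj =>
    sub_pos.2 (one_lt_pow₀ (by linarith) (Nat.mul_pos (mem_Icc.1 hj).1 (by omega)).ne')
  have hfirst : q ^ e * ∏ j ∈ Icc 1 (n / d), (q ^ (j * d) - 1) < ∏ j ∈ Icc 1 n, (q ^ j - 1) := by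
    rw [prod_Icc_eq_prod_mul_prod_filter_not_dvd (q ^ · - 1) (by omega : 0 < d) n, mul_comm,
      he, ← sum_Icc_filter_not_dvd_sub_one (by omega) hd1 hd]
    refine mul_lt_mul_of_pos_left (pow_sum_sub_one_lt_prod_pow_sub_one hq
      (fun j hj => (mem_Icc.1 (mem_filter.1 hj).1).1) ⟨2, ?_, le_rfl⟩) hP
    exact mem_filter.2
      ⟨mem_Icc.2 ⟨by omega, by omega⟩, fun h => by linarith [Nat.le_of_dvd two_pos h]⟩
  have hsecond : (n : ℤ) < q ^ e := by
    have hen : n - 2 ≤ e := by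
      rw [he, Nat.le_div_iff_mul_le two_pos]
      calc (n - 2) * 2 ≤ 1 * (n - 2) * (d - 1) := by rw [one_mul]; gcongr; omega
        _ ≤ n / d * (n - 2) * (d - 1) := by gcongr
    calc (n : ℤ) < 2 ^ (n - 2) := by exact_mod_cast Nat.lt_two_pow_sub_two hn5
      _ ≤ 2 ^ e := pow_le_pow_right₀ (by norm_num) hen
      _ ≤ q ^ e := pow_le_pow_left₀ (by norm_num) hq e
  exact ⟨hfirst, hsecond, (mul_lt_mul_of_pos_right hsecond hP).trans hfirst⟩
end

section
/- Let a be a square-free positive integer with a ≠ 11, and let ℓ be a field that is a ℚ-algebra with [ℓ : ℚ] = 2 containing an element s with s^2 = −a (so ℓ ≅ ℚ(√−a)). Let D be a division ring equipped with an ℓ-algebra structure such that ℓ is the center of D (D is central over ℓ) and dim_ℓ D = 25. Then every element x ∈ D of finite multiplicative order (x^m = 1 for some m ≥ 1) lies in the image of ℓ in D, i.e., every torsion element of D^× is central. -/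
set_option maxHeartbeats 1000000

open Polynomial IntermediateField Module

instance aux_fact11 : Fact (Nat.Prime 11) := ⟨by norm_num⟩


lemma aux_sq_ne (a : ℕ) (ha : Squarefree a) (hapos : 0 < a) (ha11 : a ≠ 11) (q : ℚ) :
    q ^ 2 ≠ 11 * a := by
  intro h
  have hden : q.den * q.den = 1 := by
    have h1 : (q * q).den = ((11 * a : ℤ) : ℚ).den := by
      rw [← sq, h]; norm_num
    rwa [Rat.mul_self_den, Rat.den_intCast] at h1
  have hq : (q.num : ℚ) = q := by
    rw [← Rat.num_div_den q]
    norm_num [Nat.eq_one_of_mul_eq_one_left hden]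
  have hz : q.num ^ 2 = (11 * a : ℤ) := by
    have : (q.num : ℚ) ^ 2 = ((11 * a : ℤ) : ℚ) := by rw [hq, h]; push_cast; ring
    exact_mod_cast this
  set n := q.num.natAbs with hn
  have hn2 : n ^ 2 = 11 * a := by
    have : (q.num ^ 2).natAbs = (11 * a : ℤ).natAbs := congrArg Int.natAbs hz
    simpa [Int.natAbs_pow, Int.natAbs_mul] using this
  have h11 : (11 : ℕ).Prime := by norm_num
  have hdvd11 : 11 ∣ n := h11.dvd_of_dvd_pow (show (11:ℕ) ∣ n ^ 2 from ⟨a, hn2⟩)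
  obtain ⟨m, hm⟩ := hdvd11
  have ham : a = 11 * m ^ 2 := by nlinarith [hn2, hm]
  have hmm : m * m ∣ a := ⟨11, by rw [ham]; ring⟩
  have hm1 : m = 1 := Nat.isUnit_iff.mp (ha m hmm)
  rw [hm1] at ham
  omega

lemma aux_pp (p k : ℕ) (hp : p.Prime) (h : (p ^ k).totient ∣ 10) : p ^ k ∣ 132 := by
  rcases Nat.eq_zero_or_pos k with rfl | hk
  · simp
  rw [Nat.totient_prime_pow hp hk] at h
  have hp1 : (p - 1) ∣ 10 := (dvd_mul_left _ _).trans h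
  have hple : p ≤ 11 := by have := Nat.le_of_dvd (by norm_num) hp1; have := hp.two_le; omega
  have hpk : p ^ (k - 1) ∣ 10 := (dvd_mul_right _ _).trans h
  have hk4 : k ≤ 4 := by
    by_contra hk4
    have h2 : 2 ^ 4 ≤ p ^ (k - 1) :=
      le_trans (Nat.pow_le_pow_right (by norm_num) (by omega)) (Nat.pow_le_pow_left hp.two_le _)
    have := Nat.le_of_dvd (by norm_num) hpk
    omega
  have hp2 := hp.two_le
  clear hpk hp1
  interval_cases p <;> interval_cases k <;> revert h hp <;> decide

lemma aux_totient (n : ℕ) (hn : 0 < n) (h : ∀ d, d ∣ n → Nat.totient d ∣ 10)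
    (h10 : Nat.totient n = 10) : n = 11 ∨ n = 22 := by
  have hdvd : n ∣ 132 := by
    rw [← Nat.factorization_le_iff_dvd (by omega) (by norm_num)]
    intro p
    by_cases hp : p.Prime
    · have h1 : p ^ n.factorization p ∣ n := Nat.ordProj_dvd n p
      have := aux_pp p (n.factorization p) hp (h _ h1)
      exact (Nat.Prime.pow_dvd_iff_le_factorization hp (by norm_num)).mp this
    · simp [Nat.factorization_eq_zero_of_not_prime _ hp]
  have hle : n < 133 := by have := Nat.le_of_dvd (by norm_num) hdvd; omega
  have key : ∀ m : ℕ, m < 133 → m.totient = 10 → m = 11 ∨ m = 22 := by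
    set_option maxRecDepth 20000 in decide
  exact key n hle h10





lemma aux_cyclo (a : ℕ) (hapos : 0 < a)
    (K : Type*) [Field K] [Algebra ℚ K] [IsCyclotomicExtension {11} ℚ K]
    (t : K) (ht : t ^ 2 = -(a : K)) : ∃ q : ℚ, q ^ 2 = 11 * a := by
  haveI : CharZero K := charZero_of_injective_algebraMap (algebraMap ℚ K).injective
  have hirr : Irreducible (cyclotomic (11 : ℕ+) ℚ) := cyclotomic.irreducible_rat (by norm_num)
  haveI : IsGalois ℚ K := IsCyclotomicExtension.isGalois (S := {11}) (K := ℚ) (L := K)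
  haveI : FiniteDimensional ℚ K := IsCyclotomicExtension.finiteDimensional {11} ℚ K
  let μ : K := IsCyclotomicExtension.zeta 11 ℚ K
  have hμ : IsPrimitiveRoot μ 11 := IsCyclotomicExtension.zeta_spec 11 ℚ K
  let e : (K ≃ₐ[ℚ] K) ≃* (ZMod 11)ˣ := IsCyclotomicExtension.autEquivPow K hirr
  have hspec : ∀ τ : K ≃ₐ[ℚ] K, τ μ = μ ^ ((e τ : ZMod 11)).val := fun τ =>
    (hμ.autToPow_spec ℚ τ).symm
  let u2 : (ZMod 11)ˣ := ZMod.unitOfCoprime 2 (by decide)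
  let σ : K ≃ₐ[ℚ] K := e.symm u2
  have heσ : e σ = u2 := e.apply_symm_apply u2
  have hσμ : σ μ = μ ^ 2 := by
    have h1 := hspec σ
    rw [heσ] at h1
    have h2 : ((u2 : ZMod 11)).val = 2 := by decide
    rw [h2] at h1
    exact h1
  have hcyc : ∀ u : (ZMod 11)ˣ, ∃ k : Fin 10, u2 ^ (k : ℕ) = u := by decide
  have hgen : ∀ τ : K ≃ₐ[ℚ] K, ∃ k : ℕ, τ = σ ^ k := by
    intro τ
    obtain ⟨k, hk⟩ := hcyc (e τ)
    refine ⟨k, e.injective ?_⟩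
    rw [map_pow, heσ, hk]
  have hfix : ∀ y : K, (∀ τ : K ≃ₐ[ℚ] K, τ y = y) → ∃ q : ℚ, algebraMap ℚ K q = y := by
    intro y hy
    have h1 : IntermediateField.fixedField (⊤ : Subgroup (K ≃ₐ[ℚ] K)) = ⊥ :=
      OrderIso.map_bot (@IsGalois.intermediateFieldEquivSubgroup ℚ _ K _ _ _ _).symm
    have h2 : y ∈ IntermediateField.fixedField (⊤ : Subgroup (K ≃ₐ[ℚ] K)) := fun g => hy g
    rw [h1, IntermediateField.mem_bot] at h2
    exact h2
  -- the Gauss sum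
  have hμ11 : μ ^ (11 : ℕ) = 1 := hμ.pow_eq_one
  let ψ : AddChar (ZMod 11) K := AddChar.zmodChar 11 hμ11
  let χ : MulChar (ZMod 11) K := (quadraticChar (ZMod 11)).ringHomComp (Int.castRingHom K)
  let g : K := gaussSum χ ψ
  have hring : ringChar (ZMod 11) ≠ 2 := by
    rw [ZMod.ringChar_zmod_n]; norm_num
  have hχne : χ ≠ 1 := by
    show (quadraticChar (ZMod 11)).ringHomComp (Int.castRingHom K) ≠ 1
    exact (MulChar.ringHomComp_ne_one_iff Int.cast_injective).mpr (quadraticChar_ne_one hring)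
  have hχquad : χ.IsQuadratic := (quadraticChar_isQuadratic _).comp _
  have hψprim : ψ.IsPrimitive := AddChar.zmodChar_primitive_of_primitive_root 11 hμ
  have hg2 : g ^ 2 = -11 := by
    show gaussSum χ ψ ^ 2 = -11
    rw [gaussSum_sq hχne hχquad hψprim]
    have h1 : quadraticChar (ZMod 11) (-1) = -1 := by decide
    have : χ (-1) = -1 := by
      rw [MulChar.ringHomComp_apply, h1]
      norm_num
    rw [this]
    norm_num [ZMod.card]
  have hσg : σ g = -g := by
    have h1 : σ g = gaussSum χ (ψ.mulShift (u2 : ZMod 11)) := by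
      show σ (gaussSum χ ψ) = _
      rw [gaussSum, gaussSum, map_sum]
      refine Finset.sum_congr rfl fun i _ => ?_
      rw [map_mul]
      congr 1
      · exact map_intCast σ _
      · have hval : ((u2 : ZMod 11)) = 2 := by decide
        rw [AddChar.mulShift_apply, hval]
        have h2 : (2 : ZMod 11) * i = i + i := by ring
        rw [h2, AddChar.map_add_eq_mul]
        show σ (μ ^ i.val) = μ ^ i.val * μ ^ i.val
        rw [map_pow, hσμ, ← pow_mul, two_mul, pow_add]
    have h3 := gaussSum_mulShift χ ψ u2
    have hχ2 : χ ((u2 : ZMod 11)) = -1 := by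
      have : quadraticChar (ZMod 11) ((u2 : ZMod 11)) = -1 := by decide
      rw [MulChar.ringHomComp_apply, this]
      norm_num
    rw [hχ2] at h3
    have : σ g = -gaussSum χ ψ := by rw [h1, ← h3]; ring
    exact this
  have hσt : σ t = t ∨ σ t = -t := by
    have h1 : (σ t) ^ 2 = t ^ 2 := by
      rw [← map_pow, ht, map_neg, map_natCast]
    have h2 : (σ t - t) * (σ t + t) = 0 := by linear_combination h1
    rcases mul_eq_zero.mp h2 with h | h
    · left; linear_combination h
    · right; linear_combination h
  have hpow : ∀ (y : K), σ y = -y → ∀ k : ℕ, (σ ^ k) y = (-1) ^ k * y := by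
    intro y hy k
    induction k with
    | zero => simp
    | succ k ih =>
      rw [pow_succ, AlgEquiv.mul_apply, hy, map_neg, ih]
      ring
  rcases hσt with hfixt | hneg
  · exfalso
    have hally : ∀ τ : K ≃ₐ[ℚ] K, τ t = t := by
      intro τ
      obtain ⟨k, rfl⟩ := hgen τ
      induction k with
      | zero => simp
      | succ k ih => rw [pow_succ, AlgEquiv.mul_apply, hfixt, ih]
    obtain ⟨q, hq⟩ := hfix t hally
    have hq2 : q ^ 2 = -(a : ℚ) := by
      have h4 : algebraMap ℚ K (q ^ 2) = algebraMap ℚ K (-(a : ℚ)) := by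
        rw [map_pow, hq, ht]; push_cast; ring
      exact (algebraMap ℚ K).injective h4
    nlinarith [sq_nonneg q, (by exact_mod_cast hapos : (0:ℚ) < (a:ℚ))]
  · have hall : ∀ τ : K ≃ₐ[ℚ] K, τ (t * g) = t * g := by
      intro τ
      obtain ⟨k, rfl⟩ := hgen τ
      rw [map_mul, hpow t hneg k, hpow g hσg k]
      have h5 : ((-1 : K) ^ k) * ((-1 : K) ^ k) = 1 := by
        rw [← pow_add, ← two_mul, pow_mul]; norm_num
      calc (-1)^k * t * ((-1)^k * g) = ((-1 : K)^k * (-1 : K)^k) * (t * g) := by ring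
      _ = t * g := by rw [h5]; ring
    obtain ⟨q, hq⟩ := hfix _ hall
    refine ⟨q, ?_⟩
    have h6 : algebraMap ℚ K (q ^ 2) = algebraMap ℚ K (11 * a) := by
      rw [map_pow, hq, mul_pow, ht, hg2]
      push_cast
      ring_nf
      norm_num
    exact (algebraMap ℚ K).injective h6


/-- Let `a` be a square-free positive integer with `a ≠ 11`, and let `ℓ ≅ ℚ(√−a)` be a
quadratic field containing a square root `s` of `−a`. Let `D` be a division ring which is
a central division algebra of degree `5` over `ℓ` (so `dim_ℓ D = 25`). Then every element
of `D` of finite multiplicative order is central, i.e., lies in the image of `ℓ`. -/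
theorem stmt_16 (a : ℕ) (ha : Squarefree a) (hapos : 0 < a) (ha11 : a ≠ 11)
    (ℓ : Type*) [Field ℓ] [Algebra ℚ ℓ] (hdeg : Module.finrank ℚ ℓ = 2)
    (s : ℓ) (hs : s ^ 2 = -(a : ℓ))
    (D : Type*) [DivisionRing D] [Algebra ℓ D]
    (hcenter : Set.center D = Set.range (algebraMap ℓ D))
    (hdim : Module.finrank ℓ D = 25)
    (x : D) (hx : ∃ m : ℕ, 0 < m ∧ x ^ m = 1) :
    x ∈ Set.range (algebraMap ℓ D) := by
  obtain ⟨m, hm, hxm⟩ := hx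
  haveI : FiniteDimensional ℓ D := Module.finite_of_finrank_pos (by rw [hdim]; norm_num)
  set K : Subalgebra ℓ D := Algebra.adjoin ℓ {x} with hKdef
  have hxK : x ∈ K := Algebra.self_mem_adjoin_singleton ℓ x
  letI : CommRing K := Algebra.adjoinCommRingOfComm ℓ (by rintro p rfl q rfl; rfl)
  haveI : NoZeroDivisors K := by
    refine ⟨fun {p q} hpq => ?_⟩
    have h2 : (p : D) * (q : D) = 0 := by
      have h3 := congrArg K.val hpq
      rw [map_mul, map_zero] at h3
      exact h3
    rcases mul_eq_zero.mp h2 with h | h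
    · exact Or.inl (Subtype.ext h)
    · exact Or.inr (Subtype.ext h)
  haveI : IsDomain K := NoZeroDivisors.to_isDomain _
  have hfield : IsField K := by
    haveI : Algebra.IsIntegral ℓ K := Algebra.IsIntegral.of_finite ℓ K
    exact (Algebra.IsIntegral.isField_iff_isField
      (algebraMap ℓ K).injective).mp (Semifield.toIsField ℓ)
  letI : Field K := hfield.toField
  have hmul : finrank ℓ K * finrank K D = 25 := by
    rw [Module.finrank_mul_finrank ℓ K D]; exact hdim
  have h125 : finrank ℓ K = 1 ∨ finrank ℓ K = 5 ∨ finrank ℓ K = 25 := by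
    have hdvd : finrank ℓ K ∣ 25 := ⟨finrank K D, hmul.symm⟩
    have hmem : finrank ℓ K ∈ Nat.divisors 25 := Nat.mem_divisors.mpr ⟨hdvd, by norm_num⟩
    rw [show Nat.divisors 25 = {1, 5, 25} from by decide] at hmem
    simpa using hmem
  rcases h125 with h1 | h5 | h25
  · -- K = ⊥, so x is in the image of ℓ
    have hbot : K = ⊥ := Subalgebra.eq_bot_of_finrank_one h1
    rw [hbot] at hxK
    rwa [Algebra.mem_bot] at hxK
  · -- the hard case: derive a contradiction
    exfalso
    -- x as an element of the field K
    set x' : K := ⟨x, hxK⟩ with hx'def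
    have hx'm : x' ^ m = 1 := by
      apply Subtype.ext
      show ((x' ^ m : K) : D) = 1
      rw [SubmonoidClass.coe_pow]
      exact hxm
    have hfin : IsOfFinOrder x' := isOfFinOrder_iff_pow_eq_one.mpr ⟨m, hm, hx'm⟩
    set n : ℕ := orderOf x' with hndef
    have hn0 : 0 < n := hfin.orderOf_pos
    have hprim : IsPrimitiveRoot x' n := IsPrimitiveRoot.orderOf x'
    -- characteristic zero and ℚ-algebra structure
    haveI : CharZero ℓ := charZero_of_injective_algebraMap (algebraMap ℚ ℓ).injective
    haveI : CharZero K := charZero_of_injective_algebraMap (algebraMap ℓ K).injective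
    haveI : IsScalarTower ℚ ℓ K := IsScalarTower.of_algebraMap_eq' (by
      apply RingHom.ext_rat)
    haveI : FiniteDimensional ℚ ℓ := Module.finite_of_finrank_pos (by rw [hdeg]; norm_num)
    haveI : FiniteDimensional ℓ K := inferInstance
    haveI : FiniteDimensional ℚ K := Module.Finite.trans ℓ K
    have hK10 : finrank ℚ K = 10 := by
      rw [← Module.finrank_mul_finrank ℚ ℓ K, hdeg, h5]
    -- the minimal polynomial of x' over ℓ has degree 5
    have hx'int : IsIntegral ℓ x' := IsIntegral.of_finite ℓ x'
    have hx'intQ : IsIntegral ℚ x' := IsIntegral.of_finite ℚ x'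
    have hadj : Algebra.adjoin ℓ {x'} = (⊤ : Subalgebra ℓ K) := by
      apply Subalgebra.map_injective (f := K.val) Subtype.val_injective
      rw [AlgHom.map_adjoin, Algebra.map_top, Subalgebra.range_val]
      simp only [Set.image_singleton]
      show Algebra.adjoin ℓ {x} = K
      rw [hKdef]
    have hdeg5 : (minpoly ℓ x').natDegree = 5 := by
      have htop : ℓ⟮x'⟯ = (⊤ : IntermediateField ℓ K) := by
        rw [← IntermediateField.toSubalgebra_injective.eq_iff,
          IntermediateField.adjoin_simple_toSubalgebra_of_isAlgebraic hx'int.isAlgebraic, hadj]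
        rfl
      have := IntermediateField.adjoin.finrank hx'int
      rw [htop, IntermediateField.finrank_top', h5] at this
      exact this.symm
    -- the minimal polynomial of x' over ℚ is the n-th cyclotomic polynomial
    have hcyc : cyclotomic n ℚ = minpoly ℚ x' := cyclotomic_eq_minpoly_rat hprim hn0
    have hphin : (minpoly ℚ x').natDegree = n.totient := by
      rw [← hcyc, natDegree_cyclotomic]
    -- 5 ≤ φ(n)
    have h5le : 5 ≤ n.totient := by
      have hdvd := minpoly.dvd_map_of_isScalarTower ℚ ℓ x'
      have hne : (minpoly ℚ x').map (algebraMap ℚ ℓ) ≠ 0 := by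
        apply Polynomial.map_ne_zero
        exact minpoly.ne_zero hx'intQ
      have := Polynomial.natDegree_le_of_dvd hdvd hne
      rw [Polynomial.natDegree_map, hphin, hdeg5] at this
      exact this
    -- φ(d) divides 10 for every divisor d of n
    have hdiv10 : ∀ d, d ∣ n → d.totient ∣ 10 := by
      intro d hd
      have hd0 : 0 < d := Nat.pos_of_dvd_of_pos hd hn0
      obtain ⟨c, hc⟩ := hd
      have hprimd : IsPrimitiveRoot (x' ^ c) d :=
        hprim.pow hn0 (by rw [hc, mul_comm])
      have hy : IsIntegral ℚ (x' ^ c) := IsIntegral.of_finite ℚ _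
      have hfr : finrank ℚ ℚ⟮(x' ^ c)⟯ = d.totient := by
        rw [IntermediateField.adjoin.finrank hy, ← cyclotomic_eq_minpoly_rat hprimd hd0,
          natDegree_cyclotomic]
      refine ⟨finrank ℚ⟮(x' ^ c)⟯ K, ?_⟩
      rw [← hK10, ← hfr, Module.finrank_mul_finrank]
    -- φ(n) = 10
    have hphi10 : n.totient = 10 := by
      have h10 := hdiv10 n dvd_rfl
      have hmem : n.totient ∈ Nat.divisors 10 := Nat.mem_divisors.mpr ⟨h10, by norm_num⟩
      rw [show Nat.divisors 10 = {1, 2, 5, 10} from by decide] at hmem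
      simp only [Finset.mem_insert, Finset.mem_singleton] at hmem
      have hne5 : n.totient ≠ 5 := by
        intro h5'
        rcases Nat.lt_or_ge n 3 with hlt | hge
        · have := Nat.totient_le n
          omega
        · have := Nat.totient_even (by omega : 2 < n)
          rw [h5'] at this
          exact absurd this (by decide)
      omega
    have hn1122 : n = 11 ∨ n = 22 := aux_totient n hn0 hdiv10 hphi10
    obtain ⟨ζ, hζ⟩ : ∃ ζ : K, IsPrimitiveRoot ζ 11 := by
      rcases hn1122 with h | h
      · exact ⟨x', h ▸ hprim⟩
      · exact ⟨x' ^ 2, hprim.pow hn0 (by rw [h])⟩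
    have hζint : IsIntegral ℚ ζ := IsIntegral.of_finite ℚ ζ
    have hζfr : finrank ℚ ℚ⟮ζ⟯ = 10 := by
      rw [IntermediateField.adjoin.finrank hζint, ← cyclotomic_eq_minpoly_rat hζ (by norm_num),
        natDegree_cyclotomic]
      decide
    have htopmem : ∀ y : K, y ∈ ℚ⟮ζ⟯ := by
      have h2 : Subalgebra.toSubmodule (ℚ⟮ζ⟯.toSubalgebra) = ⊤ := by
        apply Submodule.eq_top_of_finrank_eq
        rw [hK10]
        exact hζfr
      intro y
      have h3 : y ∈ (⊤ : Submodule ℚ K) := trivial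
      rw [← h2] at h3
      exact h3
    haveI : IsCyclotomicExtension {11} ℚ K := by
      refine ⟨fun {p} hp _ => ?_, fun y => ?_⟩
      · rw [Set.mem_singleton_iff] at hp
        subst hp
        exact ⟨ζ, by exact_mod_cast hζ⟩
      · have hy := htopmem y
        have hsub : (ℚ⟮ζ⟯).toSubalgebra ≤
            Algebra.adjoin ℚ {b : K | ∃ n : ℕ, n ∈ ({11} : Set ℕ) ∧ n ≠ 0 ∧ b ^ n = 1} := by
          rw [IntermediateField.adjoin_simple_toSubalgebra_of_isAlgebraic hζint.isAlgebraic]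
          apply Algebra.adjoin_mono
          intro z hz
          rw [Set.mem_singleton_iff] at hz
          subst hz
          exact ⟨11, rfl, by norm_num, hζ.pow_eq_one⟩
        exact hsub hy
    have ht : (algebraMap ℓ K s) ^ 2 = -(a : K) := by
      rw [← map_pow, hs, map_neg, map_natCast]
    obtain ⟨q, hq⟩ := aux_cyclo a hapos K (algebraMap ℓ K s) ht
    exact aux_sq_ne a ha hapos ha11 q hq
  · -- K = D, so D is commutative and x is central
    have hKtop : Subalgebra.toSubmodule K = ⊤ := by
      apply Submodule.eq_top_of_finrank_eq
      rw [hdim]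
      exact h25
    have hall : ∀ y : D, y ∈ K := by
      intro y
      have h3 : y ∈ (⊤ : Submodule ℓ D) := trivial
      rw [← hKtop] at h3
      exact h3
    have hcomm : ∀ y z : D, y * z = z * y := by
      intro y z
      have h := mul_comm (⟨y, hall y⟩ : K) (⟨z, hall z⟩ : K)
      exact congrArg Subtype.val h
    have hxc : x ∈ Set.center D := Semigroup.mem_center_iff.mpr fun g => hcomm g x
    rw [hcenter] at hxc
    exact hxc
end
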